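/- Let G = ⊕_{k∈ℤ} G_k be a ℤ-graded Lie superalgebra with G₁ = U₁, and let ρ : ⊕_{k≤1} G_k → ⊕_{k≤1} U_k be defined recursively by ρ(u) = u for u ∈ G₁ and ρ(x)(u) = ρ([x, u]). If ρ is injective then G is positively 0-transitive: for x ∈ ⊕_{k≤0} G_k, [G₁, x] = 0 implies x = 0. Moreover ρ is a morphism of (semilocal) graded Lie superalgebras: ρ([x, y]) = [ρ(x), ρ(y)] whenever x, y and [x, y] lie in ⊕_{k≤1} G_k ∩ domain of the Kantor bracket. -/

import Mathlib

/-- The underlying spaces of Kantor's universal graded Lie superalgebra of a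
vector space `V`: `UU V p` sits in ℤ-degree `1 - p`, with `UU V 0 = V` and
`UU V (p+1) = Hom(V, UU V p)`. -/
def UU (V : Type*) : ℕ → Type _
  | 0 => V
  | p + 1 => V → UU V p

instance instUUAddCommGroup (V : Type*) [AddCommGroup V] :
    ∀ p, AddCommGroup (UU V p)
  | 0 => inferInstanceAs (AddCommGroup V)
  | p + 1 => letI := instUUAddCommGroup V p
             inferInstanceAs (AddCommGroup (V → UU V p))

/-- Kantor's recursive bracket: `ubr a b` brackets an element of `UU V (a+1)`
(degree `-a`) with an element of `UU V b` (degree `1-b`), landing in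
`UU V (a+b)`: `[x, u] = x(u)`, `[u, x] = -(-1)^{|x|} x(u)`, and recursively
`[x, y](u) = [x, y(u)] + (-1)^{|y|} [x(u), y]`. -/
def ubr {V : Type*} [AddCommGroup V] :
    (a b : ℕ) → UU V (a + 1) → UU V b → UU V (a + b)
  | _, 0, x, u => x u
  | 0, b + 1, x, y => fun u =>
      ubr 0 b x (y u) +
        ((-1 : ℤ) ^ b) •
          (-(((-1 : ℤ) ^ b) •
            (cast (congrArg (UU V) (Nat.zero_add b).symm) (y (x u)))))
  | a + 1, b + 1, x, y => fun u =>
      ubr (a + 1) b x (y u) +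
        ((-1 : ℤ) ^ b) •
          (cast (congrArg (UU V) (by omega : a + (b + 1) = (a + 1) + b))
            (ubr a (b + 1) (x u) y))
  termination_by a b => (a, b)

/-- The canonical comparison map `ρ` from the degree `≤ 1` part of a ℤ-graded
Lie superalgebra `G` to Kantor's universal Lie superalgebra of `G₁`:
`ρ(u) = u` on `G₁` and `ρ(x)(u) = ρ([x, u])`; `rho G br p` is `ρ` in degree `1 - p`. -/
def rho (G : ℤ → Type*) (br : ∀ i j : ℤ, G i → G j → G (i + j)) :
    (p : ℕ) → G (1 - (p : ℤ)) → UU (G 1) p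
  | 0, x => cast (congrArg G (by norm_num : (1 : ℤ) - ((0 : ℕ) : ℤ) = 1)) x
  | p + 1, x => fun u =>
      rho G br p
        (cast (congrArg G
            (by push_cast; ring : (1 - ((p + 1 : ℕ) : ℤ)) + 1 = 1 - (p : ℤ)))
          (br (1 - ((p + 1 : ℕ) : ℤ)) 1 x u))

set_option linter.unusedSectionVars false
set_option maxHeartbeats 1000000

section KantorAux

variable {G : ℤ → Type*} [∀ i, AddCommGroup (G i)]

/-- Cast between graded components. -/
def gc {i j : ℤ} (h : i = j) (x : G i) : G j := cast (congrArg G h) x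

/-- Cast between components of `UU`. -/
def uc {V : Type*} {a b : ℕ} (h : a = b) (x : UU V a) : UU V b :=
  cast (congrArg (UU V) h) x

theorem gc_gc {i j k : ℤ} (h : i = j) (h' : j = k) (x : G i) :
    gc h' (gc h x) = gc (h.trans h') x := by subst h h'; rfl

theorem gc_add {i j : ℤ} (h : i = j) (x y : G i) :
    gc h (x + y) = gc h x + gc h y := by subst h; rfl

theorem gc_sub {i j : ℤ} (h : i = j) (x y : G i) :
    gc h (x - y) = gc h x - gc h y := by subst h; rfl

theorem gc_neg {i j : ℤ} (h : i = j) (x : G i) : gc h (-x) = -gc h x := by subst h; rfl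

theorem gc_zsmul {i j : ℤ} (h : i = j) (n : ℤ) (x : G i) :
    gc h (n • x) = n • gc h x := by subst h; rfl

theorem gc_zero {i j : ℤ} (h : i = j) : gc h (0 : G i) = 0 := by subst h; rfl

theorem uc_uc {V : Type*} {a b c : ℕ} (h : a = b) (h' : b = c) (x : UU V a) :
    uc h' (uc h x) = uc (h.trans h') x := by subst h h'; rfl

theorem uc_zsmul {V : Type*} [AddCommGroup V] {a b : ℕ} (h : a = b) (n : ℤ) (x : UU V a) :
    uc h (n • x) = n • uc h x := by subst h; rfl

theorem uc_neg {V : Type*} [AddCommGroup V] {a b : ℕ} (h : a = b) (x : UU V a) :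
    uc h (-x) = -uc h x := by subst h; rfl

variable (br : ∀ i j : ℤ, G i → G j → G (i + j))

theorem br_gc_left {i i' j : ℤ} (h : i = i') (x : G i) (y : G j) :
    br i' j (gc h x) y = gc (by rw [h]) (br i j x y) := by subst h; rfl

theorem br_gc_right {i j j' : ℤ} (h : j = j') (x : G i) (y : G j) :
    br i j' x (gc h y) = gc (by rw [h]) (br i j x y) := by subst h; rfl

variable (haddl : ∀ (i j : ℤ) (x x' : G i) (y : G j),
      br i j (x + x') y = br i j x y + br i j x' y)
variable (haddr : ∀ (i j : ℤ) (x : G i) (y y' : G j),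
      br i j x (y + y') = br i j x y + br i j x y')

set_option linter.unusedSectionVars false

include haddl

/-- `br` as an additive hom in the first slot. -/
def brL {i j : ℤ} (y : G j) : G i →+ G (i + j) :=
  AddMonoidHom.mk' (fun x => br i j x y) (fun a b => haddl i j a b y)

/-- `br` as an additive hom in the second slot. -/
def brR {i j : ℤ} (x : G i) : G j →+ G (i + j) :=
  AddMonoidHom.mk' (fun y => br i j x y) (fun a b => haddr i j x a b)

theorem br_zero_left {i j : ℤ} (y : G j) : br i j 0 y = 0 := (brL br haddl y).map_zero

omit haddl in
theorem rho_succ (p : ℕ) (x : G (1 - ((p+1:ℕ):ℤ))) (u : G 1) :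
    rho G br (p+1) x u
      = rho G br p (gc (by push_cast; ring) (br (1 - ((p + 1 : ℕ) : ℤ)) 1 x u)) := rfl

theorem rho_add (p : ℕ) (x y : G (1 - (p:ℤ))) :
    rho G br p (x + y) = rho G br p x + rho G br p y := by
  induction p with
  | zero => exact gc_add (by norm_num) x y
  | succ p ih =>
      funext u
      show rho G br p (gc (by push_cast; ring) (br (1 - ((p+1:ℕ):ℤ)) 1 (x + y) u))
        = rho G br p (gc (by push_cast; ring) (br (1 - ((p+1:ℕ):ℤ)) 1 x u))
          + rho G br p (gc (by push_cast; ring) (br (1 - ((p+1:ℕ):ℤ)) 1 y u))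
      rw [haddl, gc_add, ih]

/-- `rho` as an additive hom. -/
def rhoHom (p : ℕ) : G (1 - (p:ℤ)) →+ UU (G 1) p :=
  AddMonoidHom.mk' (rho G br p) (rho_add br haddl p)

theorem rho_zsmul (p : ℕ) (n : ℤ) (x : G (1 - (p:ℤ))) :
    rho G br p (n • x) = n • rho G br p x :=
  (rhoHom br haddl p).map_zsmul n x

theorem rho_sub (p : ℕ) (x y : G (1 - (p:ℤ))) :
    rho G br p (x - y) = rho G br p x - rho G br p y :=
  (rhoHom br haddl p).map_sub x y

theorem rho_neg (p : ℕ) (x : G (1 - (p:ℤ))) :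
    rho G br p (-x) = -rho G br p x :=
  (rhoHom br haddl p).map_neg x

theorem rho_zero (p : ℕ) : rho G br p (0 : G (1 - (p:ℤ))) = 0 := by
  induction p with
  | zero => exact gc_zero (by norm_num)
  | succ p ih =>
      funext u
      show rho G br p (gc (by push_cast; ring) (br (1 - ((p+1:ℕ):ℤ)) 1 0 u)) = 0
      rw [br_zero_left br haddl, gc_zero, ih]

omit haddl in
theorem rho_uc {m n : ℕ} (h : m = n) (e : (1:ℤ) - (m:ℤ) = 1 - (n:ℤ)) (x : G (1 - (m:ℤ))) :
    rho G br n (gc e x) = uc h (rho G br m x) := by subst h; rfl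

omit haddl in
theorem rho_uc' {m n : ℕ} (h : m = n) {i : ℤ} (e : i = 1 - (m:ℤ)) (e' : i = 1 - (n:ℤ))
    (x : G i) : rho G br n (gc e' x) = uc h (rho G br m (gc e x)) := by subst h; rfl

omit haddl in
theorem rho_gc_congr {m : ℕ} {i i' : ℤ} (h : i = 1 - (m:ℤ)) (h' : i' = 1 - (m:ℤ))
    (e : i = i') {t : G i} {t' : G i'} (ht : gc e t = t') :
    rho G br m (gc h t) = rho G br m (gc h' t') := by
  subst e; rw [← ht]; rfl

end KantorAux

section UbrEq

variable {V : Type*} [AddCommGroup V]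

theorem ubr_zero (a : ℕ) (x : UU V (a+1)) (u : UU V 0) : ubr a 0 x u = x u := by rw [ubr]

theorem neg_one_pow_smul_self {M : Type*} [AddCommGroup M] (b : ℕ) (z : M) :
    ((-1:ℤ)^b) • ((-1:ℤ)^b) • z = z := by
  rw [smul_smul, ← pow_add, Even.neg_one_pow ⟨b, rfl⟩, one_smul]

theorem ubr_zero_succ (b : ℕ) (x : UU V 1) (y : UU V (b+1)) (u : V) :
    ubr 0 (b+1) x y u = ubr 0 b x (y u) - uc (Nat.zero_add b).symm (y (x u)) := by
  rw [ubr]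
  show _ + ((-1:ℤ)^b) • (-(((-1:ℤ)^b) • _)) = _
  rw [smul_neg, neg_one_pow_smul_self, sub_eq_add_neg]; rfl

theorem ubr_succ_succ (a b : ℕ) (x : UU V (a+1+1)) (y : UU V (b+1)) (u : V) :
    ubr (a+1) (b+1) x y u = ubr (a+1) b x (y u) +
      ((-1:ℤ)^b) • uc (by omega : a + (b+1) = (a+1) + b) (ubr a (b+1) (x u) y) := by
  rw [ubr]; rfl

end UbrEq


theorem negOnePow_coe_eq_pow (m : ℤ) (q : ℕ) (h : Even (m - (q:ℤ))) :
    ((Int.negOnePow m : ℤˣ) : ℤ) = (-1:ℤ)^q := by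
  rcases Nat.even_or_odd q with hq | hq
  · have hm : Even m := (Int.even_sub.mp h).mpr (Int.even_coe_nat q |>.mpr hq)
    rw [Int.negOnePow_even m hm, Units.val_one, Even.neg_one_pow hq]
  · have hm : Odd m := by
      rw [← Int.not_even_iff_odd]
      intro he
      exact (Nat.not_even_iff_odd.mpr hq) ((Int.even_coe_nat q).mp ((Int.even_sub.mp h).mp he))
    rw [Int.negOnePow_odd m hm, Odd.neg_one_pow hq]
    simp


theorem key {G : ℤ → Type*} [∀ i, AddCommGroup (G i)]
    (br : ∀ i j : ℤ, G i → G j → G (i + j))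
    (haddl : ∀ (i j : ℤ) (x x' : G i) (y : G j),
      br i j (x + x') y = br i j x y + br i j x' y)
    (haddr : ∀ (i j : ℤ) (x : G i) (y y' : G j),
      br i j x (y + y') = br i j x y + br i j x y')
    (hskew : ∀ (i j : ℤ) (x : G i) (y : G j),
      br i j x y = -(((Int.negOnePow (i * j) : ℤˣ) : ℤ) •
        cast (congrArg G (by ring : j + i = i + j)) (br j i y x)))
    (hjac : ∀ (i j k : ℤ) (x : G i) (y : G j) (z : G k),
      br i (j + k) x (br j k y z) =
        cast (congrArg G (by ring : (i + j) + k = i + (j + k)))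
            (br (i + j) k (br i j x y) z) +
          ((Int.negOnePow (i * j) : ℤˣ) : ℤ) •
            cast (congrArg G (by ring : j + (i + k) = i + (j + k)))
              (br j (i + k) y (br i k x z))) :
    ∀ (n p q : ℕ), p + q = n →
      ∀ (x : G (1 - ((p + 1 : ℕ) : ℤ))) (y : G (1 - ((q + 1 : ℕ) : ℤ))),
      rho G br (p + q + 1)
          (gc (by push_cast; ring) (br (1 - ((p + 1 : ℕ) : ℤ)) (1 - ((q + 1 : ℕ) : ℤ)) x y)) =
        ubr p (q + 1) (rho G br (p + 1) x) (rho G br (q + 1) y) := by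
  intro n
  induction n using Nat.strong_induction_on with
  | _ n ih =>
  intro p q hn x y
  subst hn
  funext u
  have hA : ∀ (y : G (1 - ((q + 1 : ℕ) : ℤ))),
      rho G br (p + q) (gc (by push_cast; ring : (1 - ((p + 1 : ℕ) : ℤ)) + ((1 - ((q + 1 : ℕ) : ℤ)) + 1) = 1 - ((p + q : ℕ) : ℤ))
        (br (1 - ((p + 1 : ℕ) : ℤ)) ((1 - ((q + 1 : ℕ) : ℤ)) + 1) x (br (1 - ((q + 1 : ℕ) : ℤ)) 1 y u)))
      = ubr p q (rho G br (p + 1) x) (rho G br (q + 1) y u) := by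
    clear y
    revert ih
    cases q with
    | zero =>
        intro ih y
        rw [ubr_zero]
        show rho G br (p + 0) (gc (by push_cast; ring) (br (1 - ((p + 1 : ℕ) : ℤ)) ((1 - ((0 + 1 : ℕ) : ℤ)) + 1) x (br (1 - ((0 + 1 : ℕ) : ℤ)) 1 y u)))
          = rho G br p (gc (by push_cast; ring) (br (1 - ((p + 1 : ℕ) : ℤ)) 1 x
              (gc (by norm_num : (1:ℤ) - ((0:ℕ):ℤ) = 1)
                (gc (by norm_num : (1 - ((0 + 1 : ℕ) : ℤ)) + 1 = 1 - ((0:ℕ):ℤ))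
                  (br (1 - ((0 + 1 : ℕ) : ℤ)) 1 y u)))))
        rw [gc_gc, br_gc_right br, gc_gc]
        rfl
    | succ q' =>
        intro ih y
        have ihA := ih (p + q') (by omega) p q' rfl x
          (gc (by push_cast; ring : (1 - ((q' + 1 + 1 : ℕ) : ℤ)) + 1 = 1 - ((q' + 1 : ℕ) : ℤ)) (br (1 - ((q' + 1 + 1 : ℕ) : ℤ)) 1 y u))
        rw [br_gc_right br, gc_gc] at ihA
        exact ihA
  have hjacu : br (1 - ((p + 1 : ℕ) : ℤ)) ((1 - ((q + 1 : ℕ) : ℤ)) + 1) x (br (1 - ((q + 1 : ℕ) : ℤ)) 1 y u) =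
      gc (by ring) (br ((1 - ((p + 1 : ℕ) : ℤ)) + (1 - ((q + 1 : ℕ) : ℤ))) 1 (br (1 - ((p + 1 : ℕ) : ℤ)) (1 - ((q + 1 : ℕ) : ℤ)) x y) u) +
        ((Int.negOnePow ((1 - ((p + 1 : ℕ) : ℤ)) * (1 - ((q + 1 : ℕ) : ℤ))) : ℤˣ) : ℤ) •
          gc (by ring) (br (1 - ((q + 1 : ℕ) : ℤ)) ((1 - ((p + 1 : ℕ) : ℤ)) + 1) y (br (1 - ((p + 1 : ℕ) : ℤ)) 1 x u)) := hjac (1 - ((p + 1 : ℕ) : ℤ)) (1 - ((q + 1 : ℕ) : ℤ)) 1 x y u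
  have hsub : gc (by ring : ((1 - ((p + 1 : ℕ) : ℤ)) + (1 - ((q + 1 : ℕ) : ℤ))) + 1 = (1 - ((p + 1 : ℕ) : ℤ)) + ((1 - ((q + 1 : ℕ) : ℤ)) + 1))
        (br ((1 - ((p + 1 : ℕ) : ℤ)) + (1 - ((q + 1 : ℕ) : ℤ))) 1 (br (1 - ((p + 1 : ℕ) : ℤ)) (1 - ((q + 1 : ℕ) : ℤ)) x y) u)
      = br (1 - ((p + 1 : ℕ) : ℤ)) ((1 - ((q + 1 : ℕ) : ℤ)) + 1) x (br (1 - ((q + 1 : ℕ) : ℤ)) 1 y u) -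
        ((Int.negOnePow ((1 - ((p + 1 : ℕ) : ℤ)) * (1 - ((q + 1 : ℕ) : ℤ))) : ℤˣ) : ℤ) •
          gc (by ring) (br (1 - ((q + 1 : ℕ) : ℤ)) ((1 - ((p + 1 : ℕ) : ℤ)) + 1) y (br (1 - ((p + 1 : ℕ) : ℤ)) 1 x u)) := eq_sub_of_add_eq hjacu.symm
  have main1 : rho G br (p + q + 1) (gc (by push_cast; ring) (br (1 - ((p + 1 : ℕ) : ℤ)) (1 - ((q + 1 : ℕ) : ℤ)) x y)) u
      = ubr p q (rho G br (p + 1) x) (rho G br (q + 1) y u) -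
        ((Int.negOnePow ((1 - ((p + 1 : ℕ) : ℤ)) * (1 - ((q + 1 : ℕ) : ℤ))) : ℤˣ) : ℤ) •
          rho G br (p + q) (gc (by push_cast; ring) (br (1 - ((q + 1 : ℕ) : ℤ)) ((1 - ((p + 1 : ℕ) : ℤ)) + 1) y (br (1 - ((p + 1 : ℕ) : ℤ)) 1 x u))) := by
    calc rho G br (p + q + 1) (gc (by push_cast; ring) (br (1 - ((p + 1 : ℕ) : ℤ)) (1 - ((q + 1 : ℕ) : ℤ)) x y)) u
        = rho G br (p + q) (gc (by push_cast; ring : ((1 - ((p + 1 : ℕ) : ℤ)) + (1 - ((q + 1 : ℕ) : ℤ))) + 1 = 1 - ((p + q : ℕ) : ℤ))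
            (br ((1 - ((p + 1 : ℕ) : ℤ)) + (1 - ((q + 1 : ℕ) : ℤ))) 1 (br (1 - ((p + 1 : ℕ) : ℤ)) (1 - ((q + 1 : ℕ) : ℤ)) x y) u)) := by
          rw [rho_succ br (p + q), br_gc_left br, gc_gc]
      _ = rho G br (p + q) (gc (by push_cast; ring : (1 - ((p + 1 : ℕ) : ℤ)) + ((1 - ((q + 1 : ℕ) : ℤ)) + 1) = 1 - ((p + q : ℕ) : ℤ))
            (br (1 - ((p + 1 : ℕ) : ℤ)) ((1 - ((q + 1 : ℕ) : ℤ)) + 1) x (br (1 - ((q + 1 : ℕ) : ℤ)) 1 y u) -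
              ((Int.negOnePow ((1 - ((p + 1 : ℕ) : ℤ)) * (1 - ((q + 1 : ℕ) : ℤ))) : ℤˣ) : ℤ) •
                gc (by ring) (br (1 - ((q + 1 : ℕ) : ℤ)) ((1 - ((p + 1 : ℕ) : ℤ)) + 1) y (br (1 - ((p + 1 : ℕ) : ℤ)) 1 x u)))) :=
          rho_gc_congr br _ _ _ hsub
      _ = rho G br (p + q) (gc (by push_cast; ring : (1 - ((p + 1 : ℕ) : ℤ)) + ((1 - ((q + 1 : ℕ) : ℤ)) + 1) = 1 - ((p + q : ℕ) : ℤ))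
              (br (1 - ((p + 1 : ℕ) : ℤ)) ((1 - ((q + 1 : ℕ) : ℤ)) + 1) x (br (1 - ((q + 1 : ℕ) : ℤ)) 1 y u))) -
            ((Int.negOnePow ((1 - ((p + 1 : ℕ) : ℤ)) * (1 - ((q + 1 : ℕ) : ℤ))) : ℤˣ) : ℤ) •
              rho G br (p + q) (gc (by push_cast; ring)
                (br (1 - ((q + 1 : ℕ) : ℤ)) ((1 - ((p + 1 : ℕ) : ℤ)) + 1) y (br (1 - ((p + 1 : ℕ) : ℤ)) 1 x u))) := by
          rw [gc_sub, gc_zsmul, gc_gc, rho_sub br haddl, rho_zsmul br haddl]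
      _ = ubr p q (rho G br (p + 1) x) (rho G br (q + 1) y u) -
            ((Int.negOnePow ((1 - ((p + 1 : ℕ) : ℤ)) * (1 - ((q + 1 : ℕ) : ℤ))) : ℤˣ) : ℤ) •
              rho G br (p + q) (gc (by push_cast; ring)
                (br (1 - ((q + 1 : ℕ) : ℤ)) ((1 - ((p + 1 : ℕ) : ℤ)) + 1) y (br (1 - ((p + 1 : ℕ) : ℤ)) 1 x u))) := by
          rw [hA y]
  refine main1.trans ?_
  clear main1 hjacu hsub hA
  revert ih
  cases p with
  | zero =>
      intro ih
      rw [ubr_zero_succ]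
      have hS : ((Int.negOnePow ((1 - ((0 + 1 : ℕ) : ℤ)) * (1 - ((q + 1 : ℕ) : ℤ))) : ℤˣ) : ℤ) = 1 := by
        have h0 : (1 - ((0 + 1 : ℕ) : ℤ)) * (1 - ((q + 1 : ℕ) : ℤ)) = 0 := by push_cast; ring
        rw [h0, Int.negOnePow_zero, Units.val_one]
      rw [hS, one_smul]
      have h2 : rho G br q (gc (by push_cast; ring : (1 - ((q + 1 : ℕ) : ℤ)) + ((1 - ((0 + 1 : ℕ) : ℤ)) + 1) = 1 - (q : ℤ))
            (br (1 - ((q + 1 : ℕ) : ℤ)) ((1 - ((0 + 1 : ℕ) : ℤ)) + 1) y (br (1 - ((0 + 1 : ℕ) : ℤ)) 1 x u)))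
          = rho G br (q + 1) y (rho G br (0 + 1) x u) := by
        show rho G br q (gc (by push_cast; ring : (1 - ((q + 1 : ℕ) : ℤ)) + ((1 - ((0 + 1 : ℕ) : ℤ)) + 1) = 1 - (q : ℤ))
              (br (1 - ((q + 1 : ℕ) : ℤ)) ((1 - ((0 + 1 : ℕ) : ℤ)) + 1) y (br (1 - ((0 + 1 : ℕ) : ℤ)) 1 x u)))
            = rho G br q (gc (by push_cast; ring) (br (1 - ((q + 1 : ℕ) : ℤ)) 1 y
                (gc (by norm_num : (1:ℤ) - ((0:ℕ):ℤ) = 1)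
                  (gc (by norm_num : (1 - ((0 + 1 : ℕ) : ℤ)) + 1 = 1 - ((0:ℕ):ℤ))
                    (br (1 - ((0 + 1 : ℕ) : ℤ)) 1 x u)))))
        rw [gc_gc, br_gc_right br, gc_gc]
      have hC0 : rho G br (0 + q) (gc (by push_cast; ring)
            (br (1 - ((q + 1 : ℕ) : ℤ)) ((1 - ((0 + 1 : ℕ) : ℤ)) + 1) y (br (1 - ((0 + 1 : ℕ) : ℤ)) 1 x u)))
          = uc (Nat.zero_add q).symm (rho G br (q + 1) y (rho G br (0 + 1) x u)) :=
        (rho_uc' br (Nat.zero_add q).symm (by push_cast; ring) (by push_cast; ring) _).trans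
          (congrArg (uc (Nat.zero_add q).symm) h2)
      rw [hC0]
  | succ p'' =>
      intro ih
      rw [ubr_succ_succ]
      have hsk : br (1 - ((q + 1 : ℕ) : ℤ)) ((1 - ((p'' + 1 + 1 : ℕ) : ℤ)) + 1) y (br (1 - ((p'' + 1 + 1 : ℕ) : ℤ)) 1 x u) =
          -(((Int.negOnePow ((1 - ((q + 1 : ℕ) : ℤ)) * ((1 - ((p'' + 1 + 1 : ℕ) : ℤ)) + 1)) : ℤˣ) : ℤ) •
            gc (by ring) (br ((1 - ((p'' + 1 + 1 : ℕ) : ℤ)) + 1) (1 - ((q + 1 : ℕ) : ℤ)) (br (1 - ((p'' + 1 + 1 : ℕ) : ℤ)) 1 x u) y)) :=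
        hskew (1 - ((q + 1 : ℕ) : ℤ)) ((1 - ((p'' + 1 + 1 : ℕ) : ℤ)) + 1) y (br (1 - ((p'' + 1 + 1 : ℕ) : ℤ)) 1 x u)
      have ihC := ih (p'' + q) (by omega) p'' q rfl
        (gc (by push_cast; ring : (1 - ((p'' + 1 + 1 : ℕ) : ℤ)) + 1 = 1 - ((p'' + 1 : ℕ) : ℤ)) (br (1 - ((p'' + 1 + 1 : ℕ) : ℤ)) 1 x u)) y
      rw [br_gc_left br, gc_gc] at ihC
      have hC1 : rho G br (p'' + 1 + q) (gc (by push_cast; ring)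
            (br (1 - ((q + 1 : ℕ) : ℤ)) ((1 - ((p'' + 1 + 1 : ℕ) : ℤ)) + 1) y (br (1 - ((p'' + 1 + 1 : ℕ) : ℤ)) 1 x u)))
          = -(((Int.negOnePow ((1 - ((q + 1 : ℕ) : ℤ)) * ((1 - ((p'' + 1 + 1 : ℕ) : ℤ)) + 1)) : ℤˣ) : ℤ) •
              uc (by omega : p'' + q + 1 = p'' + 1 + q)
                (ubr p'' (q + 1)
                  (rho G br (p'' + 1)
                    (gc (by push_cast; ring : (1 - ((p'' + 1 + 1 : ℕ) : ℤ)) + 1 = 1 - ((p'' + 1 : ℕ) : ℤ))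
                      (br (1 - ((p'' + 1 + 1 : ℕ) : ℤ)) 1 x u)))
                  (rho G br (q + 1) y))) := by
        calc rho G br (p'' + 1 + q) (gc (by push_cast; ring)
              (br (1 - ((q + 1 : ℕ) : ℤ)) ((1 - ((p'' + 1 + 1 : ℕ) : ℤ)) + 1) y (br (1 - ((p'' + 1 + 1 : ℕ) : ℤ)) 1 x u)))
            = rho G br (p'' + 1 + q) (gc (by push_cast; ring :
                  (1 - ((q + 1 : ℕ) : ℤ)) + ((1 - ((p'' + 1 + 1 : ℕ) : ℤ)) + 1) = 1 - ((p'' + 1 + q : ℕ) : ℤ))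
                (-(((Int.negOnePow ((1 - ((q + 1 : ℕ) : ℤ)) * ((1 - ((p'' + 1 + 1 : ℕ) : ℤ)) + 1)) : ℤˣ) : ℤ) •
                  gc (by ring : ((1 - ((p'' + 1 + 1 : ℕ) : ℤ)) + 1) + (1 - ((q + 1 : ℕ) : ℤ)) = (1 - ((q + 1 : ℕ) : ℤ)) + ((1 - ((p'' + 1 + 1 : ℕ) : ℤ)) + 1))
                    (br ((1 - ((p'' + 1 + 1 : ℕ) : ℤ)) + 1) (1 - ((q + 1 : ℕ) : ℤ)) (br (1 - ((p'' + 1 + 1 : ℕ) : ℤ)) 1 x u) y)))) := by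
              rw [hsk]
          _ = -(((Int.negOnePow ((1 - ((q + 1 : ℕ) : ℤ)) * ((1 - ((p'' + 1 + 1 : ℕ) : ℤ)) + 1)) : ℤˣ) : ℤ) •
                rho G br (p'' + 1 + q) (gc (by push_cast; ring :
                    ((1 - ((p'' + 1 + 1 : ℕ) : ℤ)) + 1) + (1 - ((q + 1 : ℕ) : ℤ)) = 1 - ((p'' + 1 + q : ℕ) : ℤ))
                  (br ((1 - ((p'' + 1 + 1 : ℕ) : ℤ)) + 1) (1 - ((q + 1 : ℕ) : ℤ)) (br (1 - ((p'' + 1 + 1 : ℕ) : ℤ)) 1 x u) y))) := by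
              rw [gc_neg, gc_zsmul, gc_gc, rho_neg br haddl, rho_zsmul br haddl]
          _ = -(((Int.negOnePow ((1 - ((q + 1 : ℕ) : ℤ)) * ((1 - ((p'' + 1 + 1 : ℕ) : ℤ)) + 1)) : ℤˣ) : ℤ) •
                uc (by omega : p'' + q + 1 = p'' + 1 + q)
                  (rho G br (p'' + q + 1) (gc (by push_cast; ring :
                      ((1 - ((p'' + 1 + 1 : ℕ) : ℤ)) + 1) + (1 - ((q + 1 : ℕ) : ℤ)) = 1 - ((p'' + q + 1 : ℕ) : ℤ))
                    (br ((1 - ((p'' + 1 + 1 : ℕ) : ℤ)) + 1) (1 - ((q + 1 : ℕ) : ℤ)) (br (1 - ((p'' + 1 + 1 : ℕ) : ℤ)) 1 x u) y)))) := by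
              rw [rho_uc' br (by omega : p'' + q + 1 = p'' + 1 + q)
                (by push_cast; ring : ((1 - ((p'' + 1 + 1 : ℕ) : ℤ)) + 1) + (1 - ((q + 1 : ℕ) : ℤ)) = 1 - ((p'' + q + 1 : ℕ) : ℤ))
                (by push_cast; ring : ((1 - ((p'' + 1 + 1 : ℕ) : ℤ)) + 1) + (1 - ((q + 1 : ℕ) : ℤ)) = 1 - ((p'' + 1 + q : ℕ) : ℤ))]
          _ = -(((Int.negOnePow ((1 - ((q + 1 : ℕ) : ℤ)) * ((1 - ((p'' + 1 + 1 : ℕ) : ℤ)) + 1)) : ℤˣ) : ℤ) •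
                uc (by omega : p'' + q + 1 = p'' + 1 + q)
                  (ubr p'' (q + 1)
                    (rho G br (p'' + 1)
                      (gc (by push_cast; ring : (1 - ((p'' + 1 + 1 : ℕ) : ℤ)) + 1 = 1 - ((p'' + 1 : ℕ) : ℤ))
                        (br (1 - ((p'' + 1 + 1 : ℕ) : ℤ)) 1 x u)))
                    (rho G br (q + 1) y))) := by
              rw [ihC]
      rw [hC1]
      have hsign : ((Int.negOnePow ((1 - ((p'' + 1 + 1 : ℕ) : ℤ)) * (1 - ((q + 1 : ℕ) : ℤ))) : ℤˣ) : ℤ) *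
          ((Int.negOnePow ((1 - ((q + 1 : ℕ) : ℤ)) * ((1 - ((p'' + 1 + 1 : ℕ) : ℤ)) + 1)) : ℤˣ) : ℤ) = (-1 : ℤ) ^ q := by
        rw [← Units.val_mul, ← Int.negOnePow_add]
        exact negOnePow_coe_eq_pow _ q ⟨(p'' : ℤ) * (q : ℤ), by push_cast; ring⟩
      rw [sub_eq_add_neg, smul_neg, neg_neg, smul_smul, hsign]
      rfl

/-- Let `G` be a ℤ-graded Lie superalgebra (graded skew-symmetry
and Jacobi identity as hypotheses, with sign `(-1)^{ij}` realised via
`Int.negOnePow`).  If the canonical map `ρ` to Kantor's universal graded Lie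
superalgebra of `G₁` is injective, then `G` is positively `0`-transitive:
`[G₁, x] = 0` for `x` of degree `≤ 0` implies `x = 0`.  Moreover `ρ` is a
morphism of (semilocal) graded Lie superalgebras: `ρ([x, y]) = [ρ(x), ρ(y)]`
whenever `x` has degree `≤ 0` and `y` has degree `≤ 0` or degree `1`. -/
theorem rho_transitive_and_morphism
    (G : ℤ → Type*) [∀ i, AddCommGroup (G i)]
    (br : ∀ i j : ℤ, G i → G j → G (i + j))
    (haddl : ∀ (i j : ℤ) (x x' : G i) (y : G j),
      br i j (x + x') y = br i j x y + br i j x' y)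
    (haddr : ∀ (i j : ℤ) (x : G i) (y y' : G j),
      br i j x (y + y') = br i j x y + br i j x y')
    (hskew : ∀ (i j : ℤ) (x : G i) (y : G j),
      br i j x y = -(((Int.negOnePow (i * j) : ℤˣ) : ℤ) •
        cast (congrArg G (by ring : j + i = i + j)) (br j i y x)))
    (hjac : ∀ (i j k : ℤ) (x : G i) (y : G j) (z : G k),
      br i (j + k) x (br j k y z) =
        cast (congrArg G (by ring : (i + j) + k = i + (j + k)))
            (br (i + j) k (br i j x y) z) +
          ((Int.negOnePow (i * j) : ℤˣ) : ℤ) •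
            cast (congrArg G (by ring : j + (i + k) = i + (j + k)))
              (br j (i + k) y (br i k x z)))
    (hinj : ∀ p : ℕ, Function.Injective (rho G br p)) :
    -- positive `0`-transitivity with respect to `G₁`:
    (∀ p : ℕ, ∀ x : G (1 - ((p + 1 : ℕ) : ℤ)),
      (∀ u : G 1, br 1 (1 - ((p + 1 : ℕ) : ℤ)) u x = 0) → x = 0) ∧
    -- `ρ` is a morphism on pairs of non-positive degrees:
    (∀ (p q : ℕ) (x : G (1 - ((p + 1 : ℕ) : ℤ))) (y : G (1 - ((q + 1 : ℕ) : ℤ))),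
      rho G br (p + q + 1)
          (cast (congrArg G (by push_cast; ring :
              (1 - ((p + 1 : ℕ) : ℤ)) + (1 - ((q + 1 : ℕ) : ℤ)) = 1 - ((p + q + 1 : ℕ) : ℤ)))
            (br (1 - ((p + 1 : ℕ) : ℤ)) (1 - ((q + 1 : ℕ) : ℤ)) x y)) =
        ubr p (q + 1) (rho G br (p + 1) x) (rho G br (q + 1) y)) ∧
    -- `ρ` is a morphism on (non-positive, degree `1`) pairs:
    (∀ (p : ℕ) (x : G (1 - ((p + 1 : ℕ) : ℤ))) (u : G 1),
      rho G br p
          (cast (congrArg G (by push_cast; ring :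
              (1 - ((p + 1 : ℕ) : ℤ)) + 1 = 1 - ((p : ℕ) : ℤ)))
            (br (1 - ((p + 1 : ℕ) : ℤ)) 1 x u)) =
        ubr p 0 (rho G br (p + 1) x) u) := by
  refine ⟨?_, ?_, ?_⟩
  · intro p x hx
    apply hinj (p+1)
    have hz : rho G br (p+1) x = 0 := by
      funext u
      show rho G br p (gc (by push_cast; ring) (br (1 - ((p + 1 : ℕ) : ℤ)) 1 x u)) = 0
      have hsk : br (1 - ((p + 1 : ℕ) : ℤ)) 1 x u =
          -(((Int.negOnePow ((1 - ((p + 1 : ℕ) : ℤ)) * 1) : ℤˣ) : ℤ) •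
            gc (by ring) (br 1 (1 - ((p + 1 : ℕ) : ℤ)) u x)) :=
        hskew (1 - ((p + 1 : ℕ) : ℤ)) 1 x u
      rw [hsk, hx u, gc_zero, smul_zero, neg_zero, gc_zero, rho_zero br haddl]
    rw [hz, rho_zero br haddl]
  · intro p q x y
    exact key br haddl haddr hskew hjac (p + q) p q rfl x y
  · intro p x u
    refine Eq.trans ?_ (ubr_zero p (rho G br (p + 1) x) u).symm
    rfl
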